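/- arXiv:1612.07552 — 5 statements merged into one kernel-verified Lean document; each statement's English description precedes it below -/
import Mathlib

section
/- Let f be a greyscale of a finite simple connected graph G, let u and v be distinct vertices, and let w be a vertex with w ≠ u, w ≠ v lying on some u–v geodesic (i.e. d(u,w) + d(w,v) = d(u,v)). Then either F(u,v) < max{F(u,w), F(w,v)} or F(u,v) = F(u,w) = F(w,v); moreover, the equalities F(u,v) = F(u,w) = F(w,v) can hold only if f(w) belongs to the closed interval with endpoints f(u) and f(v). -/
/-! Put `a = d(u,w)` and `b = d(w,v)`, so that `d(u,v) = a + b` on a geodesic. By the triangle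
inequality `|f u - f v| / (a + b)` is at most the mediant `(|f u - f w| + |f w - f v|) / (a + b)`
of the ratios `F(u,w)` and `F(w,v)`, and a mediant never exceeds the larger ratio. Equality with
the maximum forces both ratios to agree and the triangle inequality to be tight, and tightness of
`|f u - f v| ≤ |f u - f w| + |f w - f v|` means exactly that `f w` lies between `f u` and `f v`. -/

open SimpleGraph

/-- A greyscale of a graph on vertex set `V`: a map to `[0,1]` attaining both `0` and `1`. -/
def IsGreyscale {V : Type*} (f : V → ℝ) : Prop :=
  (∀ w, 0 ≤ f w ∧ f w ≤ 1) ∧ (∃ a, f a = 0) ∧ (∃ b, f b = 1)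

/-- The grey tone of an edge: the absolute difference of the tones of its endpoints. -/
noncomputable def greyTone {V : Type*} (f : V → ℝ) : Sym2 V → ℝ :=
  Sym2.lift ⟨fun a b => |f a - f b|, fun _ _ => abs_sub_comm _ _⟩

/-- The edge-colour-increase mapping `F(u,v) = |f u - f v| / d(u,v)` (and `0` on the diagonal). -/
noncomputable def ecim {V : Type*} (G : SimpleGraph V) (f : V → ℝ) (u v : V) : ℝ :=
  letI := Classical.dec (u = v)
  if u = v then 0 else |f u - f v| / (G.dist u v : ℝ)

/-- The support greyscale for antipodal vertices `u, v` of a graph of diameter `D`. -/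
noncomputable def supportGreyscale {V : Type*} (G : SimpleGraph V) (u v : V) (D : ℕ)
    (w : V) : ℝ :=
  ((G.dist w u : ℝ) - (G.dist w v : ℝ) + (D : ℝ)) / (2 * (D : ℝ))

theorem ecim_eq_abs_sub_div_dist {V : Type*} (G : SimpleGraph V) (f : V → ℝ) (u v : V) :
    ecim G f u v = |f u - f v| / G.dist u v := by
  unfold ecim
  split_ifs with h <;> simp [h]

theorem mem_uIcc_of_abs_sub_add_abs_sub_eq {x y z : ℝ} (h : |x - y| + |y - z| = |x - z|) :
    y ∈ Set.uIcc x z := by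
  rw [← segment_eq_uIcc, mem_segment_iff_wbtw, ← dist_add_dist_eq_iff]
  simpa only [Real.dist_eq] using h

section Mediant

variable {a b A B C : ℝ}

theorem div_add_le_max_div (ha : 0 < a) (hb : 0 < b) (hC : C ≤ A + B) :
    C / (a + b) ≤ max (A / a) (B / b) := by
  have hA : A ≤ max (A / a) (B / b) * a := (div_le_iff₀ ha).1 (le_max_left _ _)
  have hB : B ≤ max (A / a) (B / b) * b := (div_le_iff₀ hb).1 (le_max_right _ _)
  rw [div_le_iff₀ (add_pos ha hb)]
  linarith

theorem eq_add_and_div_eq_div_of_div_add_eq_max (ha : 0 < a) (hb : 0 < b) (hC : C ≤ A + B)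
    (h : C / (a + b) = max (A / a) (B / b)) : C = A + B ∧ A / a = B / b := by
  set m := max (A / a) (B / b)
  have hA : A ≤ m * a := (div_le_iff₀ ha).1 (le_max_left _ _)
  have hB : B ≤ m * b := (div_le_iff₀ hb).1 (le_max_right _ _)
  have hm : C = m * (a + b) := (div_eq_iff (add_pos ha hb).ne').1 h
  have hAa : A / a = m := by rw [div_eq_iff ha.ne']; linarith
  have hBb : B / b = m := by rw [div_eq_iff hb.ne']; linarith
  exact ⟨by linarith, hAa.trans hBb.symm⟩

end Mediant

theorem stmt_3_general {V : Type*} (G : SimpleGraph V) (hG : G.Connected)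
    (f : V → ℝ) (u v w : V)
    (hwu : w ≠ u) (hwv : w ≠ v)
    (hgeo : G.dist u w + G.dist w v = G.dist u v) :
    (ecim G f u v < max (ecim G f u w) (ecim G f w v) ∨
      (ecim G f u v = ecim G f u w ∧ ecim G f u w = ecim G f w v)) ∧
    ((ecim G f u v = ecim G f u w ∧ ecim G f u w = ecim G f w v) →
      f w ∈ Set.uIcc (f u) (f v)) := by
  have ha : (0 : ℝ) < G.dist u w := mod_cast hG.pos_dist_of_ne hwu.symm
  have hb : (0 : ℝ) < G.dist w v := mod_cast hG.pos_dist_of_ne hwv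
  have hd : (G.dist u v : ℝ) = G.dist u w + G.dist w v := mod_cast hgeo.symm
  have htri : |f u - f v| ≤ |f u - f w| + |f w - f v| := abs_sub_le _ _ _
  simp only [ecim_eq_abs_sub_div_dist, hd]
  have of_eq_max := eq_add_and_div_eq_div_of_div_add_eq_max ha hb htri
  refine ⟨?_, fun ⟨h₁, h₂⟩ => ?_⟩
  · rcases (div_add_le_max_div ha hb htri).lt_or_eq with hlt | heq
    · exact .inl hlt
    · have hAB := (of_eq_max heq).2
      rw [← hAB, max_self] at heq
      exact .inr ⟨heq, hAB⟩
  · have heq := (of_eq_max (by rw [← h₂, max_self, h₁])).1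
    exact mem_uIcc_of_abs_sub_add_abs_sub_eq heq.symm

theorem stmt_3 {V : Type*} [Fintype V] (G : SimpleGraph V) (hG : G.Connected)
    (f : V → ℝ) (hf : IsGreyscale f) (u v w : V)
    (huv : u ≠ v) (hwu : w ≠ u) (hwv : w ≠ v)
    (hgeo : G.dist u w + G.dist w v = G.dist u v) :
    (ecim G f u v < max (ecim G f u w) (ecim G f w v) ∨
      (ecim G f u v = ecim G f u w ∧ ecim G f u w = ecim G f w v)) ∧
    ((ecim G f u v = ecim G f u w ∧ ecim G f u w = ecim G f w v) →
      f w ∈ Set.uIcc (f u) (f v)) :=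
  stmt_3_general G hG f u v w hwu hwv hgeo
end

section
/- Let f be a greyscale of a finite simple connected graph G and let u and v be distinct vertices such that F(u,v) = max over all pairs of vertices a,b of F(a,b), and suppose f(u) ≤ f(v). Then every vertex w lying on some u–v geodesic (d(u,w) + d(w,v) = d(u,v)) satisfies f(w) = f(u) + d(u,w)·F(u,v). -/
open SimpleGraph

/-!
A maximal ratio `F(u,v)` makes `f` Lipschitz with constant `F(u,v)`. Along a `u`–`v` geodesic
through `w`, the bounds `f w - f u ≤ F(u,v) · d(u,w)` and `f v - f w ≤ F(u,v) · d(w,v)` add up to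
the equality `f v - f u = F(u,v) · d(u,v)`, so both are tight.
-/

theorem ecim_mul_dist {V : Type*} {G : SimpleGraph V} {a b : V} (h : G.Reachable a b)
    (f : V → ℝ) : ecim G f a b * G.dist a b = |f a - f b| := by
  by_cases hab : a = b
  · simp [hab, ecim]
  · have hd : (G.dist a b : ℝ) ≠ 0 := by exact_mod_cast (h.pos_dist_of_ne hab).ne'
    simp only [ecim, if_neg hab]
    exact div_mul_cancel₀ _ hd

theorem abs_sub_le_mul_dist_of_ecim_le {V : Type*} {G : SimpleGraph V} (hG : G.Preconnected)
    {f : V → ℝ} {M : ℝ} (hM : ∀ a b, ecim G f a b ≤ M) (a b : V) :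
    |f a - f b| ≤ M * G.dist a b := by
  rw [← ecim_mul_dist (hG a b)]
  exact mul_le_mul_of_nonneg_right (hM a b) (Nat.cast_nonneg _)

theorem stmt_7_general {V : Type*} (G : SimpleGraph V) (hG : G.Connected)
    (f : V → ℝ) (u v : V)
    (hmax : ∀ a b : V, ecim G f a b ≤ ecim G f u v) (hle : f u ≤ f v) :
    ∀ w : V, G.dist u w + G.dist w v = G.dist u v →
      f w = f u + (G.dist u w : ℝ) * ecim G f u v := by
  intro w hw
  have hLip := abs_sub_le_mul_dist_of_ecim_le hG.preconnected hmax
  have huv : ecim G f u v * G.dist u v = f v - f u := by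
    rw [ecim_mul_dist (hG.preconnected u v), abs_sub_comm, abs_of_nonneg (sub_nonneg.2 hle)]
  have hgeo : (G.dist u w : ℝ) + G.dist w v = G.dist u v := by exact_mod_cast hw
  rw [← hgeo, mul_add] at huv
  have huw := abs_le.mp (hLip u w)
  have hwv := abs_le.mp (hLip w v)
  linarith [huw.1, hwv.1]

theorem stmt_7 {V : Type*} [Fintype V] (G : SimpleGraph V) (hG : G.Connected)
    (f : V → ℝ) (hf : IsGreyscale f) (u v : V) (huv : u ≠ v)
    (hmax : ∀ a b : V, ecim G f a b ≤ ecim G f u v) (hle : f u ≤ f v) :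
    ∀ w : V, G.dist u w + G.dist w v = G.dist u v →
      f w = f u + (G.dist u w : ℝ) * ecim G f u v :=
  stmt_7_general G hG f u v hmax hle
end

section
/- Let f be a greyscale of a finite simple connected graph G and let u and v be distinct vertices such that F(u,v) = max over all pairs of vertices a,b of F(a,b). Then every edge e lying on some u–v geodesic satisfies f̂(e) = F(u,v). -/
open SimpleGraph

/-
Along a geodesic from `u` to `v` the grey tones of the `d(u,v)` edges add up to at least
`|f u - f v| = d(u,v) F(u,v)` by the triangle inequality, while each of them is some
`F(a,b) ≤ F(u,v)`. So no edge can have a tone strictly below `F(u,v)`.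
-/

theorem List.eq_of_forall_le_of_length_nsmul_le_sum {ι M : Type*} [AddCommMonoid M]
    [LinearOrder M] [IsOrderedCancelAddMonoid M] {l : List ι} {g : ι → M} {m : M}
    (hle : ∀ i ∈ l, g i ≤ m) (hsum : l.length • m ≤ (l.map g).sum) :
    ∀ i ∈ l, g i = m := by
  intro i hi
  by_contra hne
  have hlt := List.sum_lt_sum g (fun _ => m) hle ⟨i, hi, lt_of_le_of_ne (hle i hi) hne⟩
  rw [List.map_const', List.sum_replicate] at hlt
  exact hsum.not_gt hlt

section

variable {V : Type*} {G : SimpleGraph V} (f : V → ℝ)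

@[simp]
theorem greyTone_mk (a b : V) : greyTone f s(a, b) = |f a - f b| := rfl

theorem ecim_of_adj {a b : V} (h : G.Adj a b) : ecim G f a b = greyTone f s(a, b) := by
  simp [ecim, h.ne, dist_eq_one_iff_adj.mpr h]

theorem dist_mul_ecim {u v : V} (h : G.Reachable u v) :
    (G.dist u v : ℝ) * ecim G f u v = |f u - f v| := by
  by_cases huv : u = v
  · simp [huv]
  · have hd : (G.dist u v : ℝ) ≠ 0 := mod_cast h.dist_eq_zero_iff.not.mpr huv
    simp [ecim, huv, mul_div_cancel₀ _ hd]

theorem abs_sub_le_sum_greyTone {u v : V} (p : G.Walk u v) :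
    |f u - f v| ≤ (p.edges.map (greyTone f)).sum := by
  induction p with
  | nil => simp
  | @cons a b c _ q ih =>
    simp only [Walk.edges_cons, List.map_cons, List.sum_cons, greyTone_mk]
    exact (abs_sub_le _ _ _).trans (add_le_add_right ih _)

end

theorem stmt_9_general {V : Type*} (G : SimpleGraph V)
    (f : V → ℝ) (u v : V)
    (hmax : ∀ a b : V, ecim G f a b ≤ ecim G f u v) :
    ∀ (p : G.Walk u v), p.IsPath → p.length = G.dist u v →
      ∀ e ∈ p.edges, greyTone f e = ecim G f u v := by
  intro p _ hlen
  have hle : ∀ e ∈ p.edges, greyTone f e ≤ ecim G f u v := by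
    intro e he
    induction e using Sym2.ind with
    | _ a b => exact ecim_of_adj f (p.adj_of_mem_edges he) ▸ hmax a b
  have hsum : p.edges.length • ecim G f u v ≤ (p.edges.map (greyTone f)).sum := by
    rw [Walk.length_edges, hlen, nsmul_eq_mul, dist_mul_ecim f p.reachable]
    exact abs_sub_le_sum_greyTone f p
  exact List.eq_of_forall_le_of_length_nsmul_le_sum hle hsum

theorem stmt_9 {V : Type*} [Fintype V] (G : SimpleGraph V) (hG : G.Connected)
    (f : V → ℝ) (hf : IsGreyscale f) (u v : V) (huv : u ≠ v)
    (hmax : ∀ a b : V, ecim G f a b ≤ ecim G f u v) :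
    ∀ (p : G.Walk u v), p.IsPath → p.length = G.dist u v →
      ∀ e ∈ p.edges, greyTone f e = ecim G f u v :=
  stmt_9_general G f u v hmax
end

section
/- Let P be the path graph with vertices w_0, w_1, …, w_n (n ≥ 1) and edges {w_{i−1}, w_i} for i = 1, …, n. Then the greyscale f defined by f(w_i) = i/n is a minimum gradation greyscale of P, and its gradation vector is the constant vector all of whose n components equal 1/n. -/
open SimpleGraph

/-- The gradation vector: the grey tones of all edges, sorted in decreasing order. -/
noncomputable def gradVec {V : Type*} [Fintype V] (G : SimpleGraph V) (f : V → ℝ) : List ℝ :=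
  letI := Classical.decEq V
  letI : DecidableRel G.Adj := Classical.decRel _
  (G.edgeFinset.val.map (greyTone f)).sort (· ≥ ·)

/-- Lexicographic comparison of gradation vectors: `f` is smaller than or equal to `g`. -/
def GradLE {V : Type*} [Fintype V] (G : SimpleGraph V) (f g : V → ℝ) : Prop :=
  gradVec G f = gradVec G g ∨ List.Lex (· < ·) (gradVec G f) (gradVec G g)

/-- A minimum gradation greyscale: a greyscale whose gradation vector is lexicographically
minimal among the gradation vectors of all greyscales. -/
def IsMinGradGreyscale {V : Type*} [Fintype V] (G : SimpleGraph V) (f : V → ℝ) : Prop :=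
  IsGreyscale f ∧ ∀ g : V → ℝ, IsGreyscale g → GradLE G f g


/-!
Every greyscale `g` of the path takes the values `0` and `1`, so by the triangle inequality along
the path between those two vertices its `n` grey tones sum to at least `1`. A decreasing list of
`n` numbers with sum at least `1` is lexicographically at least the constant list `(1/n, …, 1/n)`:
at the first entry where it differs from `1/n`, the remaining sum forces that entry to exceed
`1/n`. The linear greyscale `i ↦ i/n` has exactly this constant gradation vector.
-/

theorem List.replicate_eq_or_lex_of_nsmul_le_sum {α : Type*} [AddCommMonoid α] [LinearOrder α]
    [IsOrderedCancelAddMonoid α] {c : α} :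
    ∀ {L : List α}, L.Pairwise (· ≥ ·) → L.length • c ≤ L.sum →
      List.replicate L.length c = L ∨ List.Lex (· < ·) (List.replicate L.length c) L
  | [], _, _ => Or.inl rfl
  | a :: t, hL, hsum => by
    obtain ⟨hat, ht⟩ := List.pairwise_cons.mp hL
    rw [List.length_cons, List.sum_cons, succ_nsmul'] at hsum
    have hca : c ≤ a := le_of_nsmul_le_nsmul_right t.length.succ_ne_zero <|
      calc (t.length + 1) • c ≤ a + t.sum := by rwa [succ_nsmul']
        _ ≤ a + t.length • a := by gcongr; exact List.sum_le_card_nsmul t a hat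
        _ = (t.length + 1) • a := (succ_nsmul' a _).symm
    rw [List.length_cons, List.replicate_succ]
    rcases hca.lt_or_eq with hlt | rfl
    · exact Or.inr (List.Lex.rel hlt)
    · rcases List.replicate_eq_or_lex_of_nsmul_le_sum ht (le_of_add_le_add_left hsum) with h | h
      · exact Or.inl (congrArg _ h)
      · exact Or.inr (List.Lex.cons h)

theorem Multiset.sort_replicate {α : Type*} (r : α → α → Prop) [DecidableRel r] [IsTrans α r]
    [Std.Antisymm r] [Std.Total r] (n : ℕ) (a : α) :
    (Multiset.replicate n a).sort r = List.replicate n a := by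
  rw [← Multiset.coe_replicate, Multiset.coe_sort]
  exact List.mergeSort_eq_self _
    (List.pairwise_replicate.mpr (Or.inr ((total_of r a a).elim id id)))

theorem dist_le_sum_dist_castSucc_succ {α : Type*} [PseudoMetricSpace α] {n : ℕ}
    (g : Fin (n + 1) → α) (a b : Fin (n + 1)) :
    dist (g a) (g b) ≤ ∑ i : Fin n, dist (g i.castSucc) (g i.succ) := by
  wlog hab : a ≤ b generalizing a b
  · rw [_root_.dist_comm]; exact this b a (le_of_not_ge hab)
  set h : ℕ → α := fun i => g ⟨min i n, by omega⟩
  have hg : ∀ i : Fin (n + 1), g i = h i := fun i =>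
    congrArg g (Fin.ext (min_eq_left (Nat.lt_succ_iff.mp i.isLt)).symm)
  calc dist (g a) (g b) = dist (h a) (h b) := by rw [hg, hg]
    _ ≤ ∑ i ∈ Finset.Ico (a : ℕ) b, dist (h i) (h (i + 1)) := dist_le_Ico_sum_dist h hab
    _ ≤ ∑ i ∈ Finset.range n, dist (h i) (h (i + 1)) :=
      Finset.sum_le_sum_of_subset_of_nonneg
        (fun i hi => by simp only [Finset.mem_Ico, Finset.mem_range] at hi ⊢; omega)
        (fun _ _ _ => dist_nonneg)
    _ = ∑ i : Fin n, dist (g i.castSucc) (g i.succ) := by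
      rw [← Fin.sum_univ_eq_sum_range]; simp [hg]

theorem pairwise_gradVec {V : Type*} [Fintype V] (G : SimpleGraph V) (g : V → ℝ) :
    (gradVec G g).Pairwise (· ≥ ·) :=
  Multiset.pairwise_sort _ _

section Path

open Finset

variable {n : ℕ}

def pathEdge (n : ℕ) : Fin n ↪ Sym2 (Fin (n + 1)) where
  toFun i := s(i.castSucc, i.succ)
  inj' i j h := by
    simp only [Sym2.eq_iff, Fin.ext_iff, Fin.val_castSucc, Fin.val_succ] at h
    exact Fin.ext (by omega)

@[simp]
theorem pathEdge_apply (i : Fin n) : pathEdge n i = s(i.castSucc, i.succ) := rfl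

theorem pathGraph_edgeFinset [Fintype (pathGraph (n + 1)).edgeSet] :
    (pathGraph (n + 1)).edgeFinset = univ.map (pathEdge n) := by
  ext e
  induction e with | _ u v => ?_
  simp only [mem_edgeFinset, mem_edgeSet, pathGraph_adj, mem_map, mem_univ, true_and,
    pathEdge_apply, Sym2.eq_iff, Fin.ext_iff, Fin.val_castSucc, Fin.val_succ]
  constructor
  · rintro (h | h)
    · exact ⟨⟨u, by omega⟩, Or.inl ⟨rfl, h⟩⟩
    · exact ⟨⟨v, by omega⟩, Or.inr ⟨rfl, h⟩⟩
  · rintro ⟨i, ⟨h1, h2⟩ | ⟨h1, h2⟩⟩ <;> omega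

theorem gradVec_pathGraph (g : Fin (n + 1) → ℝ) :
    gradVec (pathGraph (n + 1)) g =
      (univ.val.map fun i : Fin n => |g i.castSucc - g i.succ|).sort (· ≥ ·) := by
  unfold gradVec
  -- the instance `gradVec` uses, so that `pathGraph_edgeFinset` matches its edge set syntactically
  let : DecidableRel (pathGraph (n + 1)).Adj := Classical.decRel _
  rw [pathGraph_edgeFinset, map_val, Multiset.map_map]
  rfl

theorem coe_gradVec_pathGraph (g : Fin (n + 1) → ℝ) :
    (gradVec (pathGraph (n + 1)) g : Multiset ℝ) =
      univ.val.map fun i : Fin n => |g i.castSucc - g i.succ| := by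
  rw [gradVec_pathGraph, Multiset.sort_eq]

theorem length_gradVec_pathGraph (g : Fin (n + 1) → ℝ) :
    (gradVec (pathGraph (n + 1)) g).length = n := by
  simpa using congrArg Multiset.card (coe_gradVec_pathGraph g)

theorem sum_gradVec_pathGraph (g : Fin (n + 1) → ℝ) :
    (gradVec (pathGraph (n + 1)) g).sum = ∑ i : Fin n, |g i.castSucc - g i.succ| := by
  rw [← Multiset.sum_coe, coe_gradVec_pathGraph]
  rfl

theorem IsGreyscale.one_le_sum_gradVec_pathGraph {g : Fin (n + 1) → ℝ} (hg : IsGreyscale g) :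
    1 ≤ (gradVec (pathGraph (n + 1)) g).sum := by
  obtain ⟨-, ⟨a, ha⟩, ⟨b, hb⟩⟩ := hg
  rw [sum_gradVec_pathGraph]
  simpa [Real.dist_eq, ha, hb] using dist_le_sum_dist_castSucc_succ g b a

theorem isGreyscale_div (hn : n ≠ 0) : IsGreyscale fun i : Fin (n + 1) => ((i : ℕ) : ℝ) / n :=
  ⟨fun i => ⟨by positivity, div_le_one_of_le₀ (by exact_mod_cast i.is_le) n.cast_nonneg⟩,
    ⟨0, by simp⟩, ⟨Fin.last n, by simp [hn]⟩⟩

theorem gradVec_pathGraph_div :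
    gradVec (pathGraph (n + 1)) (fun i : Fin (n + 1) => ((i : ℕ) : ℝ) / n) =
      List.replicate n (1 / (n : ℝ)) := by
  have hconst (i : Fin n) : |((i.castSucc : ℕ) : ℝ) / n - ((i.succ : ℕ) : ℝ) / n| = 1 / n := by
    rw [Fin.val_castSucc, Fin.val_succ, Nat.cast_succ, ← sub_div, sub_add_cancel_left, abs_div,
      abs_neg, abs_one, Nat.abs_cast]
  simp only [gradVec_pathGraph, hconst, Multiset.map_const', Finset.card_val, card_univ,
    Fintype.card_fin, Multiset.sort_replicate]

end Path

theorem stmt_13 (n : ℕ) (hn : 1 ≤ n) :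
    IsMinGradGreyscale (pathGraph (n + 1)) (fun i : Fin (n + 1) => ((i : ℕ) : ℝ) / (n : ℝ)) ∧
    gradVec (pathGraph (n + 1)) (fun i : Fin (n + 1) => ((i : ℕ) : ℝ) / (n : ℝ)) =
      List.replicate n (1 / (n : ℝ)) := by
  refine ⟨⟨isGreyscale_div (by omega), fun g hg => ?_⟩, gradVec_pathGraph_div⟩
  have hsum : (gradVec (pathGraph (n + 1)) g).length • (1 / (n : ℝ)) ≤
      (gradVec (pathGraph (n + 1)) g).sum := by
    rw [length_gradVec_pathGraph, nsmul_eq_mul,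
      mul_one_div_cancel (Nat.cast_ne_zero.mpr (by omega))]
    exact hg.one_le_sum_gradVec_pathGraph
  have hlex := List.replicate_eq_or_lex_of_nsmul_le_sum (pairwise_gradVec _ g) hsum
  rwa [length_gradVec_pathGraph, ← gradVec_pathGraph_div] at hlex
end

section
/- Let G be a finite simple connected graph with at least two vertices. Then there exists a minimum gradation greyscale of G; that is, there is a greyscale f of G whose gradation vector is lexicographically less than or equal to the gradation vector of every greyscale of G. -/
open SimpleGraph

/-! Greyscales form a compact subset of `V → ℝ`, and every entry of the gradation vector is a
2-Lipschitz function of the greyscale: the `i`-th largest of finitely many reals moves by at most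
`ε` when each of them does. A lexicographic minimum of a sequence of continuous functions on a
compact set is obtained by minimising them one after the other, each over the (compact, nonempty)
set of minimisers of the previous ones, and passing to the intersection. -/

namespace List

variable {α : Type*} [LinearOrder α]

theorem le_getD_iff_lt_countP {l : List α} (hl : l.Pairwise (· ≥ ·)) (d t : α) {i : ℕ}
    (hi : i < l.length) : t ≤ l.getD i d ↔ i < l.countP (t ≤ ·) := by
  induction l generalizing i with
  | nil => simp at hi
  | cons a l ih =>
    rw [pairwise_cons] at hl
    cases i with
    | zero =>
      simp only [getD_cons_zero, countP_cons, decide_eq_true_eq]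
      refine ⟨fun h => by simp [h], fun h => ?_⟩
      by_contra hta
      rw [if_neg hta, add_zero, countP_pos_iff] at h
      obtain ⟨x, hx, htx⟩ := h
      exact hta ((of_decide_eq_true htx).trans (hl.1 x hx))
    | succ i =>
      have hi' : i < l.length := by simpa using hi
      have hmem : l.getD i d ∈ l := by
        rw [getD_eq_getElem l d hi']; exact getElem_mem _
      rw [getD_cons_succ, countP_cons, ih hl.2 hi']
      by_cases hta : t ≤ a
      · simp [hta]
      · have : ¬ i < l.countP (t ≤ ·) := fun h =>
          hta (((ih hl.2 hi').mpr h).trans (hl.1 _ hmem))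
        simp only [hta, decide_false, Bool.false_eq_true, if_false, add_zero]
        omega

theorem eq_or_lex_of_forall_getD {l₁ l₂ : List α} (d : α) (hlen : l₁.length = l₂.length)
    (h : ∀ i, (∀ k < i, l₁.getD k d = l₂.getD k d) → l₁.getD i d ≤ l₂.getD i d) :
    l₁ = l₂ ∨ Lex (· < ·) l₁ l₂ := by
  induction l₁ generalizing l₂ with
  | nil => exact .inl (length_eq_zero_iff.mp hlen.symm).symm
  | cons a l₁ ih =>
    cases l₂ with
    | nil => simp at hlen
    | cons b l₂ =>
      rcases (h 0 (by simp)).lt_or_eq with hab | rfl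
      · exact .inr (.rel hab)
      · have htail : ∀ i, (∀ k < i, l₁.getD k d = l₂.getD k d) → l₁.getD i d ≤ l₂.getD i d :=
          fun i hpre => h (i + 1) fun k hk => by cases k <;> simp_all
        rcases ih (by simpa using hlen) htail with rfl | hlex
        · exact .inl rfl
        · exact .inr (.cons hlex)

end List

theorem Multiset.getD_sort_map_le_add {ι : Type*} (s : Multiset ι) {f g : ι → ℝ} {c : ℝ}
    (hc : 0 ≤ c) (hfg : ∀ e, f e ≤ g e + c) (i : ℕ) :
    ((s.map f).sort (· ≥ ·)).getD i 0 ≤ ((s.map g).sort (· ≥ ·)).getD i 0 + c := by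
  set lf := (s.map f).sort (· ≥ ·)
  set lg := (s.map g).sort (· ≥ ·)
  have hlen : lf.length = lg.length := by simp [lf, lg]
  have hcount (h : ι → ℝ) (t : ℝ) :
      ((s.map h).sort (· ≥ ·)).countP (t ≤ ·) = s.countP (t ≤ h ·) := by
    rw [← Multiset.coe_countP, Multiset.sort_eq, Multiset.countP_map,
      Multiset.countP_eq_card_filter]
  by_cases hi : i < lf.length
  · rw [← sub_le_iff_le_add, List.le_getD_iff_lt_countP (Multiset.pairwise_sort _ _) _ _
      (hlen ▸ hi), hcount]
    have hself := (List.le_getD_iff_lt_countP (Multiset.pairwise_sort _ _) 0 _ hi).mp le_rfl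
    rw [hcount, Multiset.countP_eq_card_filter] at hself
    rw [Multiset.countP_eq_card_filter]
    refine hself.trans_le (Multiset.card_le_card (Multiset.monotone_filter_right _ ?_))
    intro e he
    linarith [hfg e]
  · rw [List.getD_eq_default _ _ (not_lt.mp hi), List.getD_eq_default _ _ (hlen ▸ not_lt.mp hi)]
    linarith

theorem LipschitzWith.getD_sort_map {X ι : Type*} [PseudoMetricSpace X] (s : Multiset ι)
    {K : NNReal} {F : X → ι → ℝ} (hF : ∀ e, LipschitzWith K (F · e)) (i : ℕ) :
    LipschitzWith K fun x => ((s.map (F x)).sort (· ≥ ·)).getD i 0 :=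
  .of_le_add_mul K fun x y =>
    s.getD_sort_map_le_add (by positivity) (fun e => (hF e).le_add_mul x y) i

section LexMin

variable {X β : Type*} [LinearOrder β]

def lexMinimizers (K : Set X) (φ : ℕ → X → β) : ℕ → Set X
  | 0 => K
  | i + 1 => {x ∈ lexMinimizers K φ i | ∀ y ∈ lexMinimizers K φ i, φ i x ≤ φ i y}

variable {K : Set X} {φ : ℕ → X → β}

theorem lexMinimizers_succ_subset (i : ℕ) :
    lexMinimizers K φ (i + 1) ⊆ lexMinimizers K φ i :=
  fun _ hx => hx.1

theorem mem_lexMinimizers_of_forall_lt_eq {x y : X} (hy : y ∈ K) {i : ℕ}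
    (hx : x ∈ lexMinimizers K φ i) (hxy : ∀ k < i, φ k x = φ k y) :
    y ∈ lexMinimizers K φ i := by
  induction i with
  | zero => exact hy
  | succ i ih =>
    have hyi := ih (lexMinimizers_succ_subset i hx) fun k hk => hxy k (by omega)
    exact ⟨hyi, fun z hz => hxy i (by omega) ▸ hx.2 z hz⟩

variable [TopologicalSpace X] [TopologicalSpace β] [OrderClosedTopology β]

theorem isCompact_lexMinimizers (hK : IsCompact K) (hφ : ∀ i, Continuous (φ i)) (i : ℕ) :
    IsCompact (lexMinimizers K φ i) := by
  induction i with
  | zero => exact hK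
  | succ i ih =>
    have : lexMinimizers K φ (i + 1) =
        lexMinimizers K φ i ∩ ⋂ y ∈ lexMinimizers K φ i, {x | φ i x ≤ φ i y} := by
      ext x; simp [lexMinimizers]
    rw [this]
    exact ih.inter_right (isClosed_biInter fun y _ => isClosed_le (hφ i) continuous_const)

theorem lexMinimizers_nonempty (hK : IsCompact K) (hne : K.Nonempty)
    (hφ : ∀ i, Continuous (φ i)) (i : ℕ) : (lexMinimizers K φ i).Nonempty := by
  induction i with
  | zero => exact hne
  | succ i ih =>
    obtain ⟨x, hx, hmin⟩ := (isCompact_lexMinimizers hK hφ i).exists_isMinOn ih (hφ i).continuousOn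
    exact ⟨x, hx, fun y hy => hmin hy⟩

theorem IsCompact.exists_forall_lex_le [T2Space X] (hK : IsCompact K) (hne : K.Nonempty)
    (hφ : ∀ i, Continuous (φ i)) :
    ∃ x ∈ K, ∀ y ∈ K, ∀ i, (∀ k < i, φ k x = φ k y) → φ i x ≤ φ i y := by
  obtain ⟨x, hx⟩ := (isCompact_lexMinimizers hK hφ 0).nonempty_iInter_of_sequence_nonempty_isCompact_isClosed
    _ lexMinimizers_succ_subset (lexMinimizers_nonempty hK hne hφ)
    fun i => (isCompact_lexMinimizers hK hφ i).isClosed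
  rw [Set.mem_iInter] at hx
  exact ⟨x, hx 0, fun y hy i hxy => (hx (i + 1)).2 y (mem_lexMinimizers_of_forall_lt_eq hy (hx i) hxy)⟩

end LexMin

section Greyscale

variable {V : Type*}

theorem isCompact_setOf_isGreyscale [Finite V] : IsCompact {f : V → ℝ | IsGreyscale f} := by
  have hclosed : IsClosed {f : V → ℝ | IsGreyscale f} := by
    simp only [IsGreyscale, Set.ofPred_and, Set.ofPred_forall, Set.ofPred_exists]
    refine .inter (isClosed_iInter fun w => ?_) (.inter ?_ ?_)
    · exact (isClosed_le continuous_const (continuous_apply w)).inter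
        (isClosed_le (continuous_apply w) continuous_const)
    · exact isClosed_iUnion_of_finite fun a => isClosed_eq (continuous_apply a) continuous_const
    · exact isClosed_iUnion_of_finite fun b => isClosed_eq (continuous_apply b) continuous_const
  refine (isCompact_univ_pi fun _ => isCompact_Icc (a := (0 : ℝ)) (b := 1)).of_isClosed_subset
    hclosed fun f hf w _ => hf.1 w

theorem exists_isGreyscale [Nontrivial V] : ∃ f : V → ℝ, IsGreyscale f := by
  classical
  obtain ⟨a, b, hab⟩ := exists_pair_ne V
  refine ⟨fun w => if w = b then 1 else 0, fun w => ?_, ⟨a, if_neg hab⟩, ⟨b, if_pos rfl⟩⟩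
  dsimp only
  split_ifs <;> norm_num

variable [Fintype V]

theorem lipschitzWith_greyTone (e : Sym2 V) : LipschitzWith 2 fun f : V → ℝ => greyTone f e := by
  induction e using Sym2.ind with
  | _ a b =>
    refine .of_le_add_mul 2 fun f g => ?_
    have ha := dist_le_pi_dist f g a
    have hb := dist_le_pi_dist f g b
    rw [Real.dist_eq] at ha hb
    have key : |f a - f b| - |g a - g b| ≤ |f a - g a| + |f b - g b| :=
      calc |f a - f b| - |g a - g b| ≤ |(f a - f b) - (g a - g b)| := abs_sub_abs_le_abs_sub _ _
        _ = |(f a - g a) - (f b - g b)| := by ring_nf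
        _ ≤ |f a - g a| + |f b - g b| := abs_sub _ _
    simp only [greyTone, Sym2.lift_mk, NNReal.coe_ofNat]
    linarith

theorem length_gradVec (G : SimpleGraph V) (f g : V → ℝ) :
    (gradVec G f).length = (gradVec G g).length := by
  simp [gradVec]

theorem continuous_getD_gradVec (G : SimpleGraph V) (i : ℕ) :
    Continuous fun f => (gradVec G f).getD i 0 :=
  (LipschitzWith.getD_sort_map _ lipschitzWith_greyTone i).continuous

end Greyscale

theorem stmt_17_general {V : Type*} [Fintype V] [Nontrivial V] (G : SimpleGraph V) :
    ∃ f : V → ℝ, IsGreyscale f ∧ ∀ g : V → ℝ, IsGreyscale g → GradLE G f g := by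
  obtain ⟨f, hf, hmin⟩ := isCompact_setOf_isGreyscale.exists_forall_lex_le exists_isGreyscale
    (continuous_getD_gradVec G)
  exact ⟨f, hf, fun g hg => List.eq_or_lex_of_forall_getD 0 (length_gradVec G f g) (hmin g hg)⟩

theorem stmt_17 {V : Type*} [Fintype V] [Nontrivial V] (G : SimpleGraph V)
    (hG : G.Connected) :
    ∃ f : V → ℝ, IsGreyscale f ∧ ∀ g : V → ℝ, IsGreyscale g → GradLE G f g :=
  stmt_17_general G
end
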